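/- arXiv:1710.09277 — 2 statements merged into one kernel-verified Lean document; each statement's English description precedes it below -/
import Mathlib

section
/- Let H be a complex Hilbert space, D a dictionary (a set of unit vectors whose closed linear span equals H), M > 0, and f ∈ H(D,M). Suppose the Weak Orthogonal Greedy Algorithm with weakness parameters t_k ∈ (0,1] produces selections ψ_1, ψ_2, … ∈ D: with H_0 = {0}, H_k = span{ψ_1,…,ψ_k}, and residuals f_k = f − P_{H_{k-1}}(f), each ψ_k satisfies |⟨f_k, ψ_k⟩| ≥ t_k·sup_{ψ∈D} |⟨f_k, ψ⟩| and v_k := ‖ψ_k − P_{H_{k-1}}(ψ_k)‖ > 0. Then for every n ≥ 1, ‖f_n‖ ≤ M·(1 + ∑_{k=1}^{n-1} (t_k/v_k)²)^{-1/2}. -/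
/-- Orthogonal projection onto (the closure of) a subspace, as a map `H → H`. -/
noncomputable def proj {H : Type*} [NormedAddCommGroup H] [InnerProductSpace ℂ H]
    [CompleteSpace H] (K : Submodule ℂ H) (f : H) : H :=
  haveI : CompleteSpace K.topologicalClosure := K.isClosed_topologicalClosure.completeSpace_coe
  (K.topologicalClosure.orthogonalProjectionOnto f : H)

/-! If `r = f - P_K f` is the current residual, then `‖r‖² = ⟪r, f⟫ ≤ M · sup_{φ ∈ D} |⟪r, φ⟫|`
by the `ℓ¹` representation of `f`, so the weak greedy choice gives `|⟪r, ψ⟫| ≥ t ‖r‖² / M`.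
Adding `ψ` to the subspace removes at least the component of `r` along `ψ - P_K ψ`, whose
squared size is `|⟪r, ψ⟫|² / v²`. Hence `a_k = ‖f_k‖²` satisfies
`a_{k+1} ≤ a_k - (t_k / v_k)² a_k² / M²` with `a_1 ≤ M²`, and such a recursion forces
`a_n (1 + ∑_{k<n} (t_k / v_k)²) ≤ M²`. -/

open Finset

section Dictionary

variable {𝕜 E ι : Type*} [RCLike 𝕜] [NormedAddCommGroup E] [InnerProductSpace 𝕜 E]
  {D : Set E} {c : ι → 𝕜} {φ : ι → E} {f : E}

theorem norm_le_tsum_of_hasSum (hD : ∀ d ∈ D, ‖d‖ = 1) (hφ : ∀ j, φ j ∈ D)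
    (hf : HasSum (fun j => c j • φ j) f) (hc : Summable fun j => ‖c j‖) :
    ‖f‖ ≤ ∑' j, ‖c j‖ :=
  hf.norm_le_of_bounded hc.hasSum fun j => by rw [norm_smul, hD _ (hφ j), mul_one]

theorem norm_inner_le_tsum_mul_iSup (hD : ∀ d ∈ D, ‖d‖ = 1) (hφ : ∀ j, φ j ∈ D)
    (hf : HasSum (fun j => c j • φ j) f) (hc : Summable fun j => ‖c j‖) (x : E) :
    ‖(inner 𝕜 x f : 𝕜)‖ ≤ (∑' j, ‖c j‖) * ⨆ d : D, ‖(inner 𝕜 x (d : E) : 𝕜)‖ := by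
  have hbdd : BddAbove (Set.range fun d : D => ‖(inner 𝕜 x (d : E) : 𝕜)‖) := by
    refine ⟨‖x‖, Set.forall_mem_range.2 fun d => ?_⟩
    simpa [hD _ d.2] using norm_inner_le_norm (𝕜 := 𝕜) x (d : E)
  refine (hf.mapL (innerSL 𝕜 x)).norm_le_of_bounded (hc.hasSum.mul_right _) fun j => ?_
  simpa [inner_smul_right] using
    mul_le_mul_of_nonneg_left (le_ciSup hbdd ⟨φ j, hφ j⟩) (norm_nonneg (c j))

end Dictionary

theorem norm_sub_starProjection_singleton_sq {𝕜 E : Type*} [RCLike 𝕜] [NormedAddCommGroup E]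
    [InnerProductSpace 𝕜 E] (g x : E) :
    ‖x - (𝕜 ∙ g).starProjection x‖ ^ 2 = ‖x‖ ^ 2 - ‖(inner 𝕜 g x : 𝕜)‖ ^ 2 / ‖g‖ ^ 2 := by
  have hP : ‖(𝕜 ∙ g).starProjection x‖ ^ 2 = ‖(inner 𝕜 g x : 𝕜)‖ ^ 2 / ‖g‖ ^ 2 := by
    rw [Submodule.starProjection_singleton, norm_smul, norm_div, RCLike.norm_ofReal,
      abs_of_nonneg (by positivity)]
    rcases eq_or_ne ‖g‖ 0 with hg | hg
    · simp [hg]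
    · field_simp
  have hpyth := Submodule.norm_sq_eq_add_norm_sq_starProjection x (𝕜 ∙ g)
  rw [Submodule.starProjection_orthogonal_val] at hpyth
  linarith

section Projection

variable {H : Type*} [NormedAddCommGroup H] [InnerProductSpace ℂ H] [CompleteSpace H]

theorem proj_eq_starProjection (K : Submodule ℂ H) (f : H) :
    proj K f = K.topologicalClosure.starProjection f :=
  rfl

theorem proj_mem (K : Submodule ℂ H) (f : H) : proj K f ∈ K.topologicalClosure :=
  Submodule.starProjection_apply_mem _ f

theorem inner_sub_proj_eq_zero (K : Submodule ℂ H) (f : H) {w : H}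
    (hw : w ∈ K.topologicalClosure) : (inner ℂ (f - proj K f) w : ℂ) = 0 :=
  Submodule.starProjection_inner_eq_zero f w hw

theorem norm_sub_proj_le (K : Submodule ℂ H) (f : H) {w : H} (hw : w ∈ K.topologicalClosure) :
    ‖f - proj K f‖ ≤ ‖f - w‖ := by
  rw [proj_eq_starProjection, Submodule.starProjection_minimal]
  exact ciInf_le ⟨0, Set.forall_mem_range.2 fun _ => norm_nonneg _⟩ (⟨w, hw⟩ : K.topologicalClosure)

theorem inner_sub_proj_self (K : Submodule ℂ H) (f : H) :
    (inner ℂ (f - proj K f) f : ℂ) = (‖f - proj K f‖ ^ 2 : ℝ) := by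
  calc (inner ℂ (f - proj K f) f : ℂ)
      = inner ℂ (f - proj K f) (f - proj K f) + inner ℂ (f - proj K f) (proj K f) := by
        rw [← inner_add_right, sub_add_cancel]
    _ = (‖f - proj K f‖ ^ 2 : ℝ) := by
        rw [inner_sub_proj_eq_zero K f (proj_mem K f), add_zero, inner_self_eq_norm_sq_to_K]
        norm_cast

theorem norm_sub_proj_le_norm (K : Submodule ℂ H) (f : H) : ‖f - proj K f‖ ≤ ‖f‖ := by
  simpa using norm_sub_proj_le K f (Submodule.zero_mem _)

theorem sq_norm_sub_proj_le_mul_iSup {ι : Type*} {D : Set H} (hD : ∀ d ∈ D, ‖d‖ = 1)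
    {c : ι → ℂ} {φ : ι → H} (hφ : ∀ j, φ j ∈ D) {f : H} (hf : HasSum (fun j => c j • φ j) f)
    (hc : Summable fun j => ‖c j‖) {M : ℝ} (hcM : ∑' j, ‖c j‖ ≤ M) (K : Submodule ℂ H) :
    ‖f - proj K f‖ ^ 2 ≤ M * ⨆ d : D, ‖(inner ℂ (f - proj K f) (d : H) : ℂ)‖ := by
  have h := norm_inner_le_tsum_mul_iSup hD hφ hf hc (f - proj K f)
  rw [inner_sub_proj_self, Complex.norm_real, Real.norm_of_nonneg (sq_nonneg _)] at h
  exact h.trans (mul_le_mul_of_nonneg_right hcM (Real.iSup_nonneg fun _ => norm_nonneg _))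

end Projection

section Greedy

variable {H : Type*} [NormedAddCommGroup H] [InnerProductSpace ℂ H] [CompleteSpace H]

/-- When `ψ ∈ K.topologicalClosure` the denominator vanishes and, since `x / 0 = 0`, the bound
is just the monotonicity of the residual. -/
theorem sq_norm_sub_proj_le_of_le {K K' : Submodule ℂ H} (hKK' : K ≤ K') {ψ : H} (hψ : ψ ∈ K')
    (f : H) :
    ‖f - proj K' f‖ ^ 2 ≤
      ‖f - proj K f‖ ^ 2 - ‖(inner ℂ (f - proj K f) ψ : ℂ)‖ ^ 2 / ‖ψ - proj K ψ‖ ^ 2 := by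
  set r := f - proj K f
  set g := ψ - proj K ψ
  have hclosure : K.topologicalClosure ≤ K'.topologicalClosure :=
    Submodule.topologicalClosure_mono hKK'
  have hg : g ∈ K'.topologicalClosure :=
    Submodule.sub_mem _ (K'.le_topologicalClosure hψ) (hclosure (proj_mem K ψ))
  have hinner : ‖(inner ℂ r ψ : ℂ)‖ = ‖(inner ℂ g r : ℂ)‖ := by
    rw [norm_inner_symm g r, inner_sub_right, inner_sub_proj_eq_zero K f (proj_mem K ψ), sub_zero]
  have hw : proj K f + (ℂ ∙ g).starProjection r ∈ K'.topologicalClosure :=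
    Submodule.add_mem _ (hclosure (proj_mem K f))
      ((Submodule.span_singleton_le_iff_mem g _).2 hg (Submodule.starProjection_apply_mem _ r))
  calc ‖f - proj K' f‖ ^ 2 ≤ ‖f - (proj K f + (ℂ ∙ g).starProjection r)‖ ^ 2 := by
        gcongr
        exact norm_sub_proj_le K' f hw
    _ = ‖r - (ℂ ∙ g).starProjection r‖ ^ 2 := by rw [sub_add_eq_sub_sub]
    _ = ‖r‖ ^ 2 - ‖(inner ℂ r ψ : ℂ)‖ ^ 2 / ‖g‖ ^ 2 := by
        rw [norm_sub_starProjection_singleton_sq, hinner]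

theorem sq_norm_sub_proj_le_of_selection {K K' : Submodule ℂ H} (hKK' : K ≤ K') {ψ : H}
    (hψ : ψ ∈ K') {f : H} {M τ S : ℝ} (hM : 0 < M) (hτ : 0 ≤ τ)
    (hres : ‖f - proj K f‖ ^ 2 ≤ M * S) (hsel : τ * S ≤ ‖(inner ℂ (f - proj K f) ψ : ℂ)‖) :
    ‖f - proj K' f‖ ^ 2 ≤
      ‖f - proj K f‖ ^ 2 - (τ / ‖ψ - proj K ψ‖) ^ 2 * (‖f - proj K f‖ ^ 2) ^ 2 / M ^ 2 := by
  have hlower : τ * ‖f - proj K f‖ ^ 2 / M ≤ ‖(inner ℂ (f - proj K f) ψ : ℂ)‖ := by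
    refine le_trans ?_ hsel
    rw [mul_div_assoc]
    exact mul_le_mul_of_nonneg_left ((div_le_iff₀' hM).2 hres) hτ
  have hsq : (τ / ‖ψ - proj K ψ‖) ^ 2 * (‖f - proj K f‖ ^ 2) ^ 2 / M ^ 2 =
      (τ * ‖f - proj K f‖ ^ 2 / M) ^ 2 / ‖ψ - proj K ψ‖ ^ 2 := by
    ring
  rw [hsq]
  refine (sq_norm_sub_proj_le_of_le hKK' hψ f).trans (sub_le_sub_left ?_ _)
  exact div_le_div_of_nonneg_right (pow_le_pow_left₀ (by positivity) hlower 2) (sq_nonneg _)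

end Greedy

theorem mul_one_add_sum_le_of_le_sub {C : ℝ} (hC : 0 < C) {a b : ℕ → ℝ} (ha : ∀ k, 0 ≤ a k)
    (hb : ∀ k, 0 ≤ b k) (h1 : a 1 ≤ C) (hstep : ∀ k, 1 ≤ k → a (k + 1) ≤ a k - b k * a k ^ 2 / C)
    (n : ℕ) : a (n + 1) * (1 + ∑ k ∈ Icc 1 n, b k) ≤ C := by
  induction n with
  | zero => simpa using h1
  | succ n ih =>
    rw [sum_Icc_succ_top (by omega), ← add_assoc]
    set B := 1 + ∑ k ∈ Icc 1 n, b k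
    have hB : 1 ≤ B := le_add_of_nonneg_right (sum_nonneg fun k _ => hb k)
    have hx := ha (n + 1)
    have hbn := hb (n + 1)
    calc a (n + 1 + 1) * (B + b (n + 1))
        ≤ (a (n + 1) - b (n + 1) * a (n + 1) ^ 2 / C) * (B + b (n + 1)) := by
          gcongr
          exact hstep (n + 1) (by omega)
      _ ≤ C := by
        rw [← sub_nonneg]
        -- `C² - C (a - b a² / C) (B + b)` is this sum, written with `p = C - a B` and `q = b a`.
        have key : 0 ≤ (C - a (n + 1) * B - b (n + 1) * a (n + 1) / 2) ^ 2
            + 3 / 4 * (b (n + 1) * a (n + 1)) ^ 2 + (C - a (n + 1) * B) * (a (n + 1) * B) := by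
          have := sub_nonneg.2 ih
          positivity
        field_simp
        nlinarith [key]

theorem le_div_sqrt_of_sq_mul_le {x M X : ℝ} (hx : 0 ≤ x) (hM : 0 ≤ M) (hX : 0 < X)
    (h : x ^ 2 * X ≤ M ^ 2) : x ≤ M / √X := by
  rw [le_div_iff₀ (Real.sqrt_pos.2 hX)]
  refine (pow_le_pow_iff_left₀ (by positivity) hM two_ne_zero).1 ?_
  rwa [mul_pow, Real.sq_sqrt hX.le]

theorem stmt4_general {H : Type*} [NormedAddCommGroup H] [InnerProductSpace ℂ H] [CompleteSpace H]
    (D : Set H) (hD_unit : ∀ φ ∈ D, ‖φ‖ = 1)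
    (M : ℝ) (hM : 0 < M)
    (c : ℕ → ℂ) (ψt : ℕ → H) (hψt : ∀ j, ψt j ∈ D)
    (f : H) (hf : HasSum (fun j => c j • ψt j) f)
    (hc_summable : Summable fun j => ‖c j‖) (hcM : ∑' j, ‖c j‖ ≤ M)
    (t : ℕ → ℝ) (ht : ∀ k, 1 ≤ k → 0 < t k ∧ t k ≤ 1)
    (ψ : ℕ → H)
    (Hk : ℕ → Submodule ℂ H)
    (hHk : ∀ k, Hk k = Submodule.span ℂ (ψ '' {j | 1 ≤ j ∧ j ≤ k}))
    (fk : ℕ → H) (hfk : ∀ n, 1 ≤ n → fk n = f - proj (Hk (n - 1)) f)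
    (hsel : ∀ k, 1 ≤ k →
      t k * ⨆ φ : D, ‖(inner ℂ (fk k) (φ : H) : ℂ)‖ ≤ ‖(inner ℂ (fk k) (ψ k) : ℂ)‖) :
    ∀ n, 1 ≤ n → ‖fk n‖ ≤
      M / Real.sqrt (1 + ∑ k ∈ Finset.Icc 1 (n - 1),
        (t k / ‖ψ k - proj (Hk (k - 1)) (ψ k)‖) ^ 2) := by
  have hmono : ∀ k, Hk (k - 1) ≤ Hk k := fun k => by
    rw [hHk, hHk]
    exact Submodule.span_mono (Set.image_mono fun j hj => ⟨hj.1, by grind⟩)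
  have hψ_mem : ∀ k, 1 ≤ k → ψ k ∈ Hk k := fun k hk => by
    rw [hHk]
    exact Submodule.subset_span ⟨k, ⟨hk, le_rfl⟩, rfl⟩
  have hfk_succ : ∀ k, fk (k + 1) = f - proj (Hk k) f := fun k => by
    simpa using hfk (k + 1) (by omega)
  intro n hn
  obtain ⟨n, rfl⟩ := Nat.exists_eq_add_of_le' hn
  rw [Nat.add_sub_cancel]
  refine le_div_sqrt_of_sq_mul_le (norm_nonneg _) hM.le (by positivity) ?_
  refine mul_one_add_sum_le_of_le_sub (pow_pos hM 2) (fun k => sq_nonneg ‖fk k‖)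
    (fun k => sq_nonneg _) ?_ (fun k hk => ?_) n
  · have h1 : ‖fk 1‖ ≤ M := by
      rw [hfk 1 le_rfl]
      exact (norm_sub_proj_le_norm _ f).trans
        ((norm_le_tsum_of_hasSum hD_unit hψt hf hc_summable).trans hcM)
    exact pow_le_pow_left₀ (norm_nonneg _) h1 2
  · have hsel_k := hsel k hk
    rw [hfk k hk] at hsel_k
    rw [hfk_succ, hfk k hk]
    exact sq_norm_sub_proj_le_of_selection (hmono k) (hψ_mem k hk) hM (ht k hk).1.le
      (sq_norm_sub_proj_le_mul_iSup hD_unit hψt hf hc_summable hcM _) hsel_k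

/-- A posteriori error bound of WOGA: for `f ∈ H(D,M)` and WOGA selections `ψ k` with
weakness parameters `t k`, residuals `fk n = f - P_{H_{n-1}} f`, and
`v k = ‖ψ k - P_{H_{k-1}} ψ k‖ > 0`, one has
`‖fk n‖ ≤ M·(1 + ∑_{k=1}^{n-1} (t k / v k)²)^{-1/2}`. -/
theorem stmt4 {H : Type*} [NormedAddCommGroup H] [InnerProductSpace ℂ H] [CompleteSpace H]
    (D : Set H) (hD_unit : ∀ φ ∈ D, ‖φ‖ = 1)
    (hD_span : (Submodule.span ℂ D).topologicalClosure = ⊤)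
    (M : ℝ) (hM : 0 < M)
    (c : ℕ → ℂ) (ψt : ℕ → H) (hψt : ∀ j, ψt j ∈ D)
    (f : H) (hf : HasSum (fun j => c j • ψt j) f)
    (hc_summable : Summable fun j => ‖c j‖) (hcM : ∑' j, ‖c j‖ ≤ M)
    (t : ℕ → ℝ) (ht : ∀ k, 1 ≤ k → 0 < t k ∧ t k ≤ 1)
    (ψ : ℕ → H) (hψD : ∀ k, 1 ≤ k → ψ k ∈ D)
    (Hk : ℕ → Submodule ℂ H)
    (hHk : ∀ k, Hk k = Submodule.span ℂ (ψ '' {j | 1 ≤ j ∧ j ≤ k}))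
    (fk : ℕ → H) (hfk : ∀ n, 1 ≤ n → fk n = f - proj (Hk (n - 1)) f)
    (hsel : ∀ k, 1 ≤ k →
      t k * ⨆ φ : D, ‖(inner ℂ (fk k) (φ : H) : ℂ)‖ ≤ ‖(inner ℂ (fk k) (ψ k) : ℂ)‖)
    (hv : ∀ k, 1 ≤ k → 0 < ‖ψ k - proj (Hk (k - 1)) (ψ k)‖) :
    ∀ n, 1 ≤ n → ‖fk n‖ ≤
      M / Real.sqrt (1 + ∑ k ∈ Finset.Icc 1 (n - 1),
        (t k / ‖ψ k - proj (Hk (k - 1)) (ψ k)‖) ^ 2) :=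
  stmt4_general D hD_unit M hM c ψt hψt f hf hc_summable hcM t ht ψ Hk hHk fk hfk hsel
end

section
/- Let H be a complex Hilbert space, N > 0, and let f = ∑_{k=1}^∞ d_k φ_k converging in H with ‖φ_k‖ ≤ 1 for all k and ∑_{k=1}^∞ |d_k| ≤ N. Let g ∈ H satisfy ⟨g, f − g⟩ = 0, and let B ∈ H be a unit vector such that |⟨g, φ_k⟩| ≤ |⟨g, B⟩| for all k ≥ 1. Then ‖g − ⟨g, B⟩B‖² ≤ ‖g‖²·(1 − ‖g‖²/N²). -/
/-! Since `⟨g, f⟩ = ‖g‖²`, expanding `f = ∑ d k • φ k` and the maximal selection give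
`‖g‖² ≤ N |⟨g, B⟩|`, while Pythagoras gives `‖g - ⟨g, B⟩ B‖² = ‖g‖² - |⟨g, B⟩|²`. -/

open scoped InnerProductSpace

section

variable {𝕜 H : Type*} [RCLike 𝕜] [NormedAddCommGroup H] [InnerProductSpace 𝕜 H]

theorem norm_sub_inner_smul_sq_of_norm_eq_one {B : H} (hB : ‖B‖ = 1) (g : H) :
    ‖g - ⟪B, g⟫_𝕜 • B‖ ^ 2 = ‖g‖ ^ 2 - ‖⟪B, g⟫_𝕜‖ ^ 2 := by
  have hre : RCLike.re (⟪g, ⟪B, g⟫_𝕜 • B⟫_𝕜) = ‖⟪B, g⟫_𝕜‖ ^ 2 := by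
    rw [inner_smul_right, ← inner_conj_symm g B, RCLike.mul_conj, ← RCLike.ofReal_pow,
      RCLike.ofReal_re]
  rw [norm_sub_sq (𝕜 := 𝕜), hre, norm_smul, hB]
  ring

theorem norm_inner_le_tsum_norm_mul_of_hasSum {d : ℕ → 𝕜} {φ : ℕ → H} {f : H}
    (hf : HasSum (fun k => d k • φ k) f) (hd : Summable fun k => ‖d k‖) (g : H) {M : ℝ}
    (hM : ∀ k, ‖⟪g, φ k⟫_𝕜‖ ≤ M) :
    ‖⟪g, f⟫_𝕜‖ ≤ (∑' k, ‖d k‖) * M := by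
  have hsum : HasSum (fun k => d k * ⟪g, φ k⟫_𝕜) ⟪g, f⟫_𝕜 := by
    simpa [inner_smul_right] using hf.mapL (innerSL 𝕜 g)
  have hterm : ∀ k, ‖d k * ⟪g, φ k⟫_𝕜‖ ≤ ‖d k‖ * M := fun k => by
    rw [norm_mul]
    exact mul_le_mul_of_nonneg_left (hM k) (norm_nonneg _)
  rw [← tsum_mul_right, ← hsum.tsum_eq]
  exact tsum_of_norm_bounded (hd.mul_right M).hasSum hterm

end

theorem sq_div_sq_le_sq_of_le_mul {a b N : ℝ} (hN : 0 < N) (ha : 0 ≤ a) (hab : a ≤ N * b) :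
    a ^ 2 / N ^ 2 ≤ b ^ 2 := by
  rw [div_le_iff₀ (by positivity)]
  nlinarith

theorem stmt10_general {H : Type*} [NormedAddCommGroup H] [InnerProductSpace ℂ H]
    (N : ℝ) (hN : 0 < N) (d : ℕ → ℂ) (φ : ℕ → H)
    (f : H) (hf : HasSum (fun k => d k • φ k) f)
    (hd_summable : Summable fun k => ‖d k‖) (hdN : ∑' k, ‖d k‖ ≤ N)
    (g : H) (hg : (inner ℂ g (f - g) : ℂ) = 0)
    (B : H) (hB : ‖B‖ = 1)
    (hsel : ∀ k, ‖(inner ℂ g (φ k) : ℂ)‖ ≤ ‖(inner ℂ g B : ℂ)‖) :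
    ‖g - (inner ℂ B g : ℂ) • B‖ ^ 2 ≤ ‖g‖ ^ 2 * (1 - ‖g‖ ^ 2 / N ^ 2) := by
  have hgf : ‖g‖ ^ 2 = ‖⟪g, f⟫_ℂ‖ := by
    rw [inner_sub_right, sub_eq_zero] at hg
    rw [hg, inner_self_eq_norm_sq_to_K, norm_pow, RCLike.norm_ofReal, abs_norm]
  have hgB : ‖g‖ ^ 2 ≤ N * ‖⟪B, g⟫_ℂ‖ := by
    rw [hgf, norm_inner_symm B g]
    calc ‖⟪g, f⟫_ℂ‖ ≤ (∑' k, ‖d k‖) * ‖⟪g, B⟫_ℂ‖ :=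
          norm_inner_le_tsum_norm_mul_of_hasSum hf hd_summable g hsel
      _ ≤ N * ‖⟪g, B⟫_ℂ‖ := mul_le_mul_of_nonneg_right hdN (norm_nonneg _)
  have hsq := sq_div_sq_le_sq_of_le_mul hN (by positivity) hgB
  rw [norm_sub_inner_smul_sq_of_norm_eq_one hB]
  linarith [show ‖g‖ ^ 2 * (1 - ‖g‖ ^ 2 / N ^ 2) = ‖g‖ ^ 2 - (‖g‖ ^ 2) ^ 2 / N ^ 2 by ring]

/-- One-step recursion inequality of Pre-OGA with maximal selection: with
`f = ∑ d k • φ k`, `‖φ k‖ ≤ 1`, `∑|d k| ≤ N`, `⟨g, f-g⟩ = 0`, and a unit vector `B`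
with `|⟨g, φ k⟩| ≤ |⟨g, B⟩|` for all `k`, one has
`‖g - ⟨g,B⟩B‖² ≤ ‖g‖²·(1 - ‖g‖²/N²)`.
(Here `⟨g,B⟩`, linear in the first argument, is Mathlib's `inner B g`.) -/
theorem stmt10 {H : Type*} [NormedAddCommGroup H] [InnerProductSpace ℂ H] [CompleteSpace H]
    (N : ℝ) (hN : 0 < N) (d : ℕ → ℂ) (φ : ℕ → H) (hφ : ∀ k, ‖φ k‖ ≤ 1)
    (f : H) (hf : HasSum (fun k => d k • φ k) f)
    (hd_summable : Summable fun k => ‖d k‖) (hdN : ∑' k, ‖d k‖ ≤ N)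
    (g : H) (hg : (inner ℂ g (f - g) : ℂ) = 0)
    (B : H) (hB : ‖B‖ = 1)
    (hsel : ∀ k, ‖(inner ℂ g (φ k) : ℂ)‖ ≤ ‖(inner ℂ g B : ℂ)‖) :
    ‖g - (inner ℂ B g : ℂ) • B‖ ^ 2 ≤ ‖g‖ ^ 2 * (1 - ‖g‖ ^ 2 / N ^ 2) :=
  stmt10_general N hN d φ f hf hd_summable hdN g hg B hB hsel
end
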